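/- Let N be a positive integer and let f₁, f₂ : ℝ² → ℂ be functions of the form f_i = ∑_{j=1}^{n_i} c_j^i · 1_{R_j^i}, where c_j^i ∈ ℂ, each R_j^i = [a_j^i, b_j^i] × [c_j^i{}', d_j^i] is an axis-parallel closed rectangle contained in [0,1)² with a_j^i < b_j^i and c_j^i{}' < d_j^i, and 4 n_i ≤ N (so each f_i involves at most N rectangle vertices in total). If the Fourier transforms satisfy 𝓕f₁(m, n) = 𝓕f₂(m, n) for every (m, n) in the sampling set A_{2N}(1) = ⋃_{r=1}^{2N} [2⌊2N/r⌋]₀ × [2r]₀, then f₁ = f₂ almost everywhere on ℝ². -/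

import Mathlib

/-- The sampling set `A_N(D) = ⋃_{r=1}^{N} [2⌊N/r⌋D]₀ × [2rD]₀ ⊆ ℤ²`
(represented as a finite set of pairs of natural numbers). -/
def sampSet (N D : ℕ) : Finset (ℕ × ℕ) :=
  (Finset.Icc 1 N).biUnion fun r =>
    Finset.range (2 * (N / r) * D + 1) ×ˢ Finset.range (2 * r * D + 1)

/-- The Fourier transform `𝓕f(t) = ∫_{ℝ²} f(x) e^{−2πi⟨x,t⟩} dx` of a function
`f : ℝ² → ℂ`. -/
noncomputable def fourierTransform2 (f : ℝ × ℝ → ℂ) (t : ℝ × ℝ) : ℂ :=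
  ∫ x : ℝ × ℝ, f x * Complex.exp (-(2 * Real.pi * Complex.I * (x.1 * t.1 + x.2 * t.2)))

/-!
Off the finitely many grid lines through the vertices, `∑ⱼ cⱼ 1_{Rⱼ}` is a signed combination of
quadrant indicators `1_{x ≥ p₁, y ≥ p₂}` over the at most `4n` vertices `p`. For `m, n ≠ 0` its
Fourier sample at `(m, n)` is, up to the factor `(2πim)(2πin)`, the moment
`∑ₚ W(p) z(p₁)^m z(p₂)^n` of the vertex weights, where `z(x) = e^{-2πix}` is injective on `[0,1)`.
If these moments vanish for all `mn ≤ M` and there are at most `M` vertices, all weights vanish: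
when the vertices occupy `k` columns, a column with the fewest vertices, `q` of them, has `kq ≤ M`,
so a Vandermonde argument in `m ≤ k` across the columns followed by one in `n ≤ q` inside that
column kills its weights; remove the column and induct. The difference `f₁ - f₂` is such a
combination with `4(n₁ + n₂) ≤ 2N` vertices, and every `(m, n)` with `mn ≤ 2N` lies in `A_{2N}(1)`.
-/

open Complex Real MeasureTheory

section Moments

open Finset Set

variable {α K : Type*} [CommRing K] [IsDomain K]

theorem eq_zero_of_sum_mul_pow_eq_zero (s : Finset α) {z : α → K} (hz : InjOn z s)
    (hz0 : ∀ a ∈ s, z a ≠ 0) {d : α → K}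
    (h : ∀ m, 1 ≤ m → m ≤ #s → ∑ a ∈ s, d a * z a ^ m = 0) : ∀ a ∈ s, d a = 0 := by
  intro a ha
  let e := s.equivFin
  -- Mathlib's Vandermonde lemma uses the exponents `0, …, #s - 1`; apply it to `d * z`.
  have hv : (fun i => d (e.symm i) * z (e.symm i)) = 0 := by
    refine Matrix.eq_zero_of_forall_pow_sum_mul_pow_eq_zero (f := fun i => z (e.symm i))
      (fun i j hij => e.symm.injective (Subtype.ext (hz (e.symm i).2 (e.symm j).2 hij)))
      fun i => ?_
    rw [← h (i + 1) (by omega) i.2, ← s.sum_coe_sort, ← e.symm.sum_comp]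
    simp only [pow_succ, mul_assoc, mul_comm (z _)]
  simpa [e, hz0 a ha] using congrFun hv (e ⟨a, ha⟩)

variable {u v : α → K} {W : α → K} {M : ℕ}

theorem exists_column_eq_zero_of_moments_eq_zero {s : Finset α} (hs : s.Nonempty)
    (huv : InjOn (fun p => (u p, v p)) s) (hu0 : ∀ p ∈ s, u p ≠ 0) (hv0 : ∀ p ∈ s, v p ≠ 0)
    (hM : #s ≤ M)
    (hW : ∀ m n : ℕ, 1 ≤ m → 1 ≤ n → m * n ≤ M → ∑ p ∈ s, W p * u p ^ m * v p ^ n = 0) :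
    ∃ p₀ ∈ s, ∀ p ∈ s, u p = u p₀ → W p = 0 := by
  classical
  obtain ⟨ζ, hζ, hmin⟩ := (s.image u).exists_min_image (fun ζ => #{p ∈ s | u p = ζ})
    (hs.image u)
  obtain ⟨p₀, hp₀, rfl⟩ := mem_image.1 hζ
  refine ⟨p₀, hp₀, fun p hp hp₀ => ?_⟩
  set col := {p ∈ s | u p = u p₀}
  have hcard : #(s.image u) * #col ≤ M := calc
    #(s.image u) * #col = ∑ _ζ ∈ s.image u, #col := by rw [sum_const, smul_eq_mul]
    _ ≤ ∑ ζ ∈ s.image u, #{p ∈ s | u p = ζ} := sum_le_sum hmin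
    _ = #s := (card_eq_sum_card_image u s).symm
    _ ≤ M := hM
  have hrow : ∀ n, 1 ≤ n → n ≤ #col → ∑ p ∈ col, W p * v p ^ n = 0 := by
    intro n hn hnq
    refine eq_zero_of_sum_mul_pow_eq_zero (s.image u) (injOn_id _)
      (d := fun ζ => ∑ p ∈ s with u p = ζ, W p * v p ^ n)
      (fun ζ hζ => ?_) (fun m hm hmX => ?_) (u p₀) hζ
    · obtain ⟨p, hp, rfl⟩ := mem_image.1 hζ
      exact hu0 p hp
    · rw [← hW m n hm hn ((Nat.mul_le_mul hmX hnq).trans hcard),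
        ← sum_fiberwise_of_maps_to fun p hp => mem_image_of_mem u hp]
      refine sum_congr rfl fun ζ _ => ?_
      rw [sum_mul]
      refine sum_congr rfl fun p hp => ?_
      rw [(mem_filter.1 hp).2, id, mul_right_comm]
  refine eq_zero_of_sum_mul_pow_eq_zero col (fun p hp q hq hpq => ?_)
    (fun p hp => hv0 p (mem_filter.1 hp).1) hrow p (mem_filter.2 ⟨hp, hp₀⟩)
  rw [mem_coe, mem_filter] at hp hq
  exact huv hp.1 hq.1 (Prod.ext (hp.2.trans hq.2.symm) hpq)

theorem eq_zero_of_moments_eq_zero (s : Finset α)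
    (huv : InjOn (fun p => (u p, v p)) s) (hu0 : ∀ p ∈ s, u p ≠ 0) (hv0 : ∀ p ∈ s, v p ≠ 0)
    (hM : #s ≤ M)
    (hW : ∀ m n : ℕ, 1 ≤ m → 1 ≤ n → m * n ≤ M → ∑ p ∈ s, W p * u p ^ m * v p ^ n = 0) :
    ∀ p ∈ s, W p = 0 := by
  classical
  induction s using Finset.strongInduction with
  | H s ih =>
    rcases s.eq_empty_or_nonempty with rfl | hs
    · simp
    obtain ⟨p₀, hp₀, hcol⟩ := exists_column_eq_zero_of_moments_eq_zero hs huv hu0 hv0 hM hW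
    have hrest := ih {p ∈ s | u p ≠ u p₀} (filter_ssubset.2 ⟨p₀, hp₀, by simp⟩)
      (huv.mono (filter_subset _ _)) (fun p hp => hu0 p (mem_filter.1 hp).1)
      (fun p hp => hv0 p (mem_filter.1 hp).1) ((card_filter_le _ _).trans hM)
      fun m n hm hn hmn => by
        rw [sum_filter_of_ne (p := fun p => u p ≠ u p₀)
          fun p hp hne h => hne (by rw [hcol p hp h]; ring)]
        exact hW m n hm hn hmn
    intro p hp
    by_cases h : u p = u p₀
    · exact hcol p hp h
    · exact hrest p (mem_filter.2 ⟨hp, h⟩)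

theorem sum_mul_eq_zero_of_moments_eq_zero {ι : Type*} [Fintype ι] (P : ι → α) (w : ι → K)
    (huv : InjOn (fun p => (u p, v p)) (range P)) (hu0 : ∀ i, u (P i) ≠ 0)
    (hv0 : ∀ i, v (P i) ≠ 0) (hM : Fintype.card ι ≤ M)
    (hw : ∀ m n : ℕ, 1 ≤ m → 1 ≤ n → m * n ≤ M → ∑ i, w i * (u (P i) ^ m * v (P i) ^ n) = 0)
    (Φ : α → K) : ∑ i, w i * Φ (P i) = 0 := by
  classical
  have hgroup : ∀ Φ : α → K,
      ∑ i, w i * Φ (P i) = ∑ p ∈ univ.image P, (∑ i with P i = p, w i) * Φ p := fun Φ => by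
    rw [← sum_fiberwise_of_maps_to fun i _ => mem_image_of_mem P (mem_univ i)]
    refine sum_congr rfl fun p _ => ?_
    rw [sum_mul]
    exact sum_congr rfl fun i hi => by rw [(mem_filter.1 hi).2]
  have hW := eq_zero_of_moments_eq_zero (univ.image P) (W := fun p => ∑ i with P i = p, w i)
    (huv.mono (by simp)) (by simpa using hu0) (by simpa using hv0) (card_image_le.trans hM)
    fun m n hm hn hmn => by
      simp only [mul_assoc]
      rw [← hgroup fun p => u p ^ m * v p ^ n]
      exact hw m n hm hn hmn
  rw [hgroup]
  exact sum_eq_zero fun p hp => by rw [hW p hp, zero_mul]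

end Moments

section Fourier

open Set

noncomputable def expNegTwoPiI (x : ℝ) : ℂ := cexp (-(2 * π * I * x))

lemma expNegTwoPiI_ne_zero (x : ℝ) : expNegTwoPiI x ≠ 0 := Complex.exp_ne_zero _

lemma expNegTwoPiI_pow (x : ℝ) (m : ℕ) : expNegTwoPiI x ^ m = cexp (-(2 * π * I * m) * x) := by
  rw [expNegTwoPiI, ← Complex.exp_nat_mul]
  ring_nf

lemma injOn_expNegTwoPiI : InjOn expNegTwoPiI (Ico 0 1) := by
  have h : ∀ x, expNegTwoPiI x = Circle.exp (-(2 * π * x)) := fun x => by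
    rw [Circle.coe_exp, expNegTwoPiI]; push_cast; ring_nf
  intro x hx y hy hxy
  have hmaps : ∀ x ∈ Ico (0 : ℝ) 1, -(2 * π * x) ∈ Ioc (-(2 * π)) 0 := fun x hx =>
    ⟨by nlinarith [hx.2, pi_pos], by nlinarith [hx.1, pi_pos]⟩
  have := Circle.exp_injOn_Ioc (by linarith) (hmaps x hx) (hmaps y hy)
    (Subtype.ext (by rw [← h, ← h, hxy]))
  nlinarith [pi_pos]

lemma integrable_mul_fourierKernel {f : ℝ × ℝ → ℂ} (hf : Integrable f) (t : ℝ × ℝ) :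
    Integrable fun x : ℝ × ℝ => f x * cexp (-(2 * π * I * (x.1 * t.1 + x.2 * t.2))) := by
  refine hf.mul_bdd (c := 1) (by fun_prop) (ae_of_all _ fun x => ?_)
  rw [Complex.norm_exp]
  simp

lemma fourierTransform2_sub {f g : ℝ × ℝ → ℂ} (hf : Integrable f) (hg : Integrable g)
    (t : ℝ × ℝ) : fourierTransform2 (f - g) t = fourierTransform2 f t - fourierTransform2 g t := by
  simp only [fourierTransform2, Pi.sub_apply, sub_mul]
  exact integral_sub (integrable_mul_fourierKernel hf t) (integrable_mul_fourierKernel hg t)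

lemma fourierTransform2_finset_sum {ι : Type*} (s : Finset ι) (c : ι → ℂ)
    (f : ι → ℝ × ℝ → ℂ) (hf : ∀ j ∈ s, Integrable (f j)) (t : ℝ × ℝ) :
    fourierTransform2 (fun x => ∑ j ∈ s, c j * f j x) t =
      ∑ j ∈ s, c j * fourierTransform2 (f j) t := by
  simp only [fourierTransform2, Finset.sum_mul]
  rw [integral_finsetSum _ fun j hj => ?_]
  · simp only [mul_assoc, integral_const_mul]
  · simpa only [mul_assoc] using (integrable_mul_fourierKernel (hf j hj) t).const_mul (c j)

variable {a b a' b' : ℝ}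

lemma integrable_indicator_Icc_prod :
    Integrable ((Icc a b ×ˢ Icc a' b').indicator (1 : ℝ × ℝ → ℂ)) :=
  (integrable_indicator_iff (measurableSet_Icc.prod measurableSet_Icc)).2
    (integrableOn_const (isCompact_Icc.prod isCompact_Icc).measure_lt_top.ne)

lemma fourierTransform2_indicator_Icc_prod (s t : ℝ) :
    fourierTransform2 ((Icc a b ×ˢ Icc a' b').indicator 1) (s, t) =
      (∫ x in Icc a b, cexp (-(2 * π * I * s) * x)) *
        ∫ y in Icc a' b', cexp (-(2 * π * I * t) * y) := by
  rw [← setIntegral_prod_mul, fourierTransform2, ← Measure.volume_eq_prod,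
    ← integral_indicator (measurableSet_Icc.prod measurableSet_Icc)]
  congr 1 with x
  simp only [indicator, Pi.one_apply]
  split_ifs
  · rw [one_mul, ← Complex.exp_add]; ring_nf
  · rw [zero_mul]

lemma integral_Icc_cexp_mul (hab : a ≤ b) {c : ℂ} (hc : c ≠ 0) :
    ∫ x in Icc a b, cexp (c * x) = (cexp (c * b) - cexp (c * a)) / c := by
  rw [integral_Icc_eq_integral_Ioc, ← intervalIntegral.integral_of_le hab,
    integral_exp_mul_complex hc]

lemma indicator_Ico_prod_one_apply (hab : a ≤ b) (hab' : a' ≤ b') (z : ℝ × ℝ) :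
    (Ico a b ×ˢ Ico a' b').indicator (1 : ℝ × ℝ → ℂ) z =
      ((Ici a).indicator 1 z.1 - (Ici b).indicator 1 z.1) *
        ((Ici a').indicator 1 z.2 - (Ici b').indicator 1 z.2) := by
  obtain ⟨x, y⟩ := z
  rw [← Ici_sdiff_Ici, ← Ici_sdiff_Ici, indicator_prod_one,
    indicator_sdiff (Ici_subset_Ici.2 hab), indicator_sdiff (Ici_subset_Ici.2 hab')]
  rfl

end Fourier

section RectangleSums

open Set

variable {ι : Type*} [Fintype ι] (c : ι → ℂ) (a b a' b' : ι → ℝ)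

noncomputable def rectSum (x : ℝ × ℝ) : ℂ :=
  ∑ j, c j * (Icc (a j) (b j) ×ˢ Icc (a' j) (b' j)).indicator 1 x

def vertexSum (F G : ℝ → ℂ) : ℂ :=
  ∑ j, c j * (F (a j) - F (b j)) * (G (a' j) - G (b' j))

def rectCorner (i : ι × Bool × Bool) : ℝ × ℝ :=
  (cond i.2.1 (a i.1) (b i.1), cond i.2.2 (a' i.1) (b' i.1))

lemma vertexSum_eq_sum_rectCorner (F G : ℝ → ℂ) :
    vertexSum c a b a' b' F G = ∑ i : ι × Bool × Bool,
      c i.1 * cond i.2.1 1 (-1) * cond i.2.2 1 (-1) *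
        (F (rectCorner a b a' b' i).1 * G (rectCorner a b a' b' i).2) := by
  simp only [vertexSum, rectCorner, Fintype.sum_prod_type, Fintype.sum_bool, cond_true,
    cond_false]
  exact Finset.sum_congr rfl fun j _ => by ring

variable {c a b a' b'}

lemma integrable_rectSum : Integrable (rectSum c a b a' b') :=
  integrable_finsetSum _ fun j _ => integrable_indicator_Icc_prod.const_mul (c j)

lemma fourierTransform2_rectSum (hab : ∀ j, a j ≤ b j) (hab' : ∀ j, a' j ≤ b' j) {m n : ℕ}
    (hm : m ≠ 0) (hn : n ≠ 0) :
    fourierTransform2 (rectSum c a b a' b') (m, n) =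
      vertexSum c a b a' b' (fun x => expNegTwoPiI x ^ m) (fun y => expNegTwoPiI y ^ n) /
        (2 * π * I * m * (2 * π * I * n)) := by
  have hm' : -(2 * π * I * m) ≠ 0 := by simp [pi_ne_zero, hm]
  have hn' : -(2 * π * I * n) ≠ 0 := by simp [pi_ne_zero, hn]
  unfold rectSum
  rw [fourierTransform2_finset_sum _ _ _ fun j _ => integrable_indicator_Icc_prod, vertexSum,
    Finset.sum_div]
  refine Finset.sum_congr rfl fun j _ => ?_
  simp only [fourierTransform2_indicator_Icc_prod, ofReal_natCast,
    integral_Icc_cexp_mul (hab j) hm', integral_Icc_cexp_mul (hab' j) hn', expNegTwoPiI_pow]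
  field_simp
  ring

lemma rectSum_ae_eq_vertexSum (hab : ∀ j, a j ≤ b j) (hab' : ∀ j, a' j ≤ b' j) :
    rectSum c a b a' b' =ᵐ[volume] fun z => vertexSum c a b a' b'
      (fun x => (Ici x).indicator 1 z.1) (fun y => (Ici y).indicator 1 z.2) := by
  have hIco : ∀ᵐ z ∂volume, ∀ j,
      (Icc (a j) (b j) ×ˢ Icc (a' j) (b' j)).indicator (1 : ℝ × ℝ → ℂ) z =
        (Ico (a j) (b j) ×ˢ Ico (a' j) (b' j)).indicator 1 z := by
    refine ae_all_iff.2 fun j => indicator_ae_eq_of_ae_eq_set ?_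
    rw [Measure.volume_eq_prod]
    exact (Measure.set_prod_ae_eq Ico_ae_eq_Icc Ico_ae_eq_Icc).symm
  filter_upwards [hIco] with z hz
  simp only [rectSum, vertexSum, hz, indicator_Ico_prod_one_apply (hab _) (hab' _), mul_assoc]

theorem vertexSum_eq_zero_of_moments_eq_zero {M : ℕ} (hcard : 4 * Fintype.card ι ≤ M)
    (ha : ∀ j, a j ∈ Ico 0 1) (hb : ∀ j, b j ∈ Ico 0 1)
    (ha' : ∀ j, a' j ∈ Ico 0 1) (hb' : ∀ j, b' j ∈ Ico 0 1)
    (h : ∀ m n : ℕ, 1 ≤ m → 1 ≤ n → m * n ≤ M →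
      vertexSum c a b a' b' (fun x => expNegTwoPiI x ^ m) (fun y => expNegTwoPiI y ^ n) = 0)
    (F G : ℝ → ℂ) : vertexSum c a b a' b' F G = 0 := by
  have hcorner : range (rectCorner a b a' b') ⊆ Ico 0 1 ×ˢ Ico 0 1 := by
    rintro _ ⟨⟨j, σ, τ⟩, rfl⟩
    exact ⟨by cases σ; exacts [hb j, ha j], by cases τ; exacts [hb' j, ha' j]⟩
  rw [vertexSum_eq_sum_rectCorner]
  refine sum_mul_eq_zero_of_moments_eq_zero (u := expNegTwoPiI ∘ Prod.fst)
    (v := expNegTwoPiI ∘ Prod.snd) (M := M) _ _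
    ((injOn_expNegTwoPiI.prodMap injOn_expNegTwoPiI).mono hcorner)
    (fun _ => expNegTwoPiI_ne_zero _) (fun _ => expNegTwoPiI_ne_zero _)
    (by simpa [mul_comm] using hcard)
    (fun m n hm hn hmn => ?_) fun p => F p.1 * G p.2
  rw [← h m n hm hn hmn, vertexSum_eq_sum_rectCorner]
  rfl

theorem rectSum_ae_eq_zero_of_fourierTransform2 {M : ℕ} (hcard : 4 * Fintype.card ι ≤ M)
    (hr : ∀ j, 0 ≤ a j ∧ a j ≤ b j ∧ b j < 1 ∧ 0 ≤ a' j ∧ a' j ≤ b' j ∧ b' j < 1)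
    (hFT : ∀ m n : ℕ, 1 ≤ m → 1 ≤ n → m * n ≤ M →
      fourierTransform2 (rectSum c a b a' b') (m, n) = 0) :
    rectSum c a b a' b' =ᵐ[volume] 0 := by
  have hab j := (hr j).2.1
  have hab' j := (hr j).2.2.2.2.1
  have hvertex := vertexSum_eq_zero_of_moments_eq_zero hcard
    (fun j => ⟨(hr j).1, (hab j).trans_lt (hr j).2.2.1⟩)
    (fun j => ⟨(hr j).1.trans (hab j), (hr j).2.2.1⟩)
    (fun j => ⟨(hr j).2.2.2.1, (hab' j).trans_lt (hr j).2.2.2.2.2⟩)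
    (fun j => ⟨(hr j).2.2.2.1.trans (hab' j), (hr j).2.2.2.2.2⟩) fun m n hm hn hmn => by
      have h := hFT m n hm hn hmn
      rw [fourierTransform2_rectSum hab hab' (by omega) (by omega), div_eq_zero_iff] at h
      exact h.resolve_right (by simp [pi_ne_zero]; omega)
  filter_upwards [rectSum_ae_eq_vertexSum hab hab'] with z hz
  rw [hz, hvertex, Pi.zero_apply]

lemma rectSum_sumElim {κ : Type*} [Fintype κ] (c₁ : ι → ℂ) (c₂ : κ → ℂ)
    (a₁ b₁ a₁' b₁' : ι → ℝ) (a₂ b₂ a₂' b₂' : κ → ℝ) :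
    rectSum (Sum.elim c₁ (-c₂)) (Sum.elim a₁ a₂) (Sum.elim b₁ b₂) (Sum.elim a₁' a₂')
        (Sum.elim b₁' b₂') = rectSum c₁ a₁ b₁ a₁' b₁' - rectSum c₂ a₂ b₂ a₂' b₂' := by
  ext x
  simp [rectSum, Fintype.sum_sum_type, sub_eq_add_neg]

end RectangleSums

lemma mem_sampSet_of_mul_le {N D m n : ℕ} (hD : 0 < D) (hm : 0 < m) (hn : 0 < n)
    (hmn : m * n ≤ N) : (m, n) ∈ sampSet N D := by
  have hmN : m ≤ N / n := (Nat.le_div_iff_mul_le hn).2 hmn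
  simp only [sampSet, Finset.mem_biUnion, Finset.mem_Icc, Finset.mem_product, Finset.mem_range]
  refine ⟨n, ⟨hn, le_trans (Nat.le_mul_of_pos_left n hm) hmn⟩, ?_, ?_⟩ <;> nlinarith

theorem rectangle_sum_determined_by_fourier_samples_general (N : ℕ)
    (n₁ n₂ : ℕ) (hn₁ : 4 * n₁ ≤ N) (hn₂ : 4 * n₂ ≤ N)
    (c₁ : Fin n₁ → ℂ) (c₂ : Fin n₂ → ℂ)
    (a₁ b₁ a₁' b₁' : Fin n₁ → ℝ) (a₂ b₂ a₂' b₂' : Fin n₂ → ℝ)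
    (hr₁ : ∀ j, 0 ≤ a₁ j ∧ a₁ j < b₁ j ∧ b₁ j < 1 ∧ 0 ≤ a₁' j ∧ a₁' j < b₁' j ∧ b₁' j < 1)
    (hr₂ : ∀ j, 0 ≤ a₂ j ∧ a₂ j < b₂ j ∧ b₂ j < 1 ∧ 0 ≤ a₂' j ∧ a₂' j < b₂' j ∧ b₂' j < 1)
    (f₁ f₂ : ℝ × ℝ → ℂ)
    (hf₁ : f₁ = fun x => ∑ j, c₁ j *
      Set.indicator (Set.Icc (a₁ j) (b₁ j) ×ˢ Set.Icc (a₁' j) (b₁' j)) (fun _ => (1 : ℂ)) x)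
    (hf₂ : f₂ = fun x => ∑ j, c₂ j *
      Set.indicator (Set.Icc (a₂ j) (b₂ j) ×ˢ Set.Icc (a₂' j) (b₂' j)) (fun _ => (1 : ℂ)) x)
    (hsamp : ∀ mn ∈ sampSet (2 * N) 1,
      fourierTransform2 f₁ ((mn.1 : ℝ), (mn.2 : ℝ)) =
      fourierTransform2 f₂ ((mn.1 : ℝ), (mn.2 : ℝ))) :
    f₁ =ᵐ[MeasureTheory.volume] f₂ := by
  replace hf₁ : f₁ = rectSum c₁ a₁ b₁ a₁' b₁' := hf₁
  replace hf₂ : f₂ = rectSum c₂ a₂ b₂ a₂' b₂' := hf₂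
  have hdiff := rectSum_sumElim c₁ c₂ a₁ b₁ a₁' b₁' a₂ b₂ a₂' b₂'
  rw [← sub_ae_eq_zero, hf₁, hf₂, ← hdiff]
  refine rectSum_ae_eq_zero_of_fourierTransform2 (M := 2 * N)
    (by simp only [Fintype.card_sum, Fintype.card_fin]; omega) ?_
    fun m n hm hn hmn => ?_
  · rintro (j | j)
    · obtain ⟨h₁, h₂, h₃, h₄, h₅, h₆⟩ := hr₁ j
      exact ⟨h₁, h₂.le, h₃, h₄, h₅.le, h₆⟩
    · obtain ⟨h₁, h₂, h₃, h₄, h₅, h₆⟩ := hr₂ j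
      exact ⟨h₁, h₂.le, h₃, h₄, h₅.le, h₆⟩
  · rw [hdiff, fourierTransform2_sub integrable_rectSum integrable_rectSum, ← hf₁, ← hf₂,
      sub_eq_zero]
    exact hsamp (m, n) (mem_sampSet_of_mul_le one_pos hm hn hmn)

/-- Two finite linear combinations of indicator functions of axis-parallel
closed rectangles contained in `[0,1)²`, each involving at most `N` rectangle vertices in
total (`4nᵢ ≤ N`), whose Fourier transforms agree on the sampling set `A_{2N}(1)`, are equal
almost everywhere on `ℝ²`. -/
theorem rectangle_sum_determined_by_fourier_samples (N : ℕ) (hN : 0 < N)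
    (n₁ n₂ : ℕ) (hn₁ : 4 * n₁ ≤ N) (hn₂ : 4 * n₂ ≤ N)
    (c₁ : Fin n₁ → ℂ) (c₂ : Fin n₂ → ℂ)
    (a₁ b₁ a₁' b₁' : Fin n₁ → ℝ) (a₂ b₂ a₂' b₂' : Fin n₂ → ℝ)
    (hr₁ : ∀ j, 0 ≤ a₁ j ∧ a₁ j < b₁ j ∧ b₁ j < 1 ∧ 0 ≤ a₁' j ∧ a₁' j < b₁' j ∧ b₁' j < 1)
    (hr₂ : ∀ j, 0 ≤ a₂ j ∧ a₂ j < b₂ j ∧ b₂ j < 1 ∧ 0 ≤ a₂' j ∧ a₂' j < b₂' j ∧ b₂' j < 1)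
    (f₁ f₂ : ℝ × ℝ → ℂ)
    (hf₁ : f₁ = fun x => ∑ j, c₁ j *
      Set.indicator (Set.Icc (a₁ j) (b₁ j) ×ˢ Set.Icc (a₁' j) (b₁' j)) (fun _ => (1 : ℂ)) x)
    (hf₂ : f₂ = fun x => ∑ j, c₂ j *
      Set.indicator (Set.Icc (a₂ j) (b₂ j) ×ˢ Set.Icc (a₂' j) (b₂' j)) (fun _ => (1 : ℂ)) x)
    (hsamp : ∀ mn ∈ sampSet (2 * N) 1,
      fourierTransform2 f₁ ((mn.1 : ℝ), (mn.2 : ℝ)) =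
      fourierTransform2 f₂ ((mn.1 : ℝ), (mn.2 : ℝ))) :
    f₁ =ᵐ[MeasureTheory.volume] f₂ :=
  rectangle_sum_determined_by_fourier_samples_general N n₁ n₂ hn₁ hn₂ c₁ c₂ a₁ b₁ a₁' b₁' a₂ b₂ a₂'
    b₂' hr₁ hr₂ f₁ f₂ hf₁ hf₂ hsamp
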